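/- arXiv:2407.00793 — 2 statements merged into one kernel-verified Lean document; each statement's English description precedes it below -/
import Mathlib

section
/- For the renewal process N_t built from i.i.d. square-integrable positive inter-arrival times τ_n with θ := E[τ₁], for every M > 0 one has sup_{t ∈ [0,M]} |N_{nt}/n − t/θ| → 0 in probability as n → ∞. -/
/-!
A law-of-large-numbers statement for renewal processes: if the inter-arrival
times `τₙ` are i.i.d., positive and square-integrable with mean `θ`, then
`sup_{t ∈ [0,M]} |N_{nt}/n − t/θ| → 0` in probability as `n → ∞`.
-/

open MeasureTheory ProbabilityTheory Filter Set Topology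


private lemma aux_tendsto_atTop {a : ℕ → ℝ} {θ : ℝ} (hθ : 0 < θ)
    (ha : Tendsto (fun n : ℕ => a n / n) atTop (𝓝 θ)) : Tendsto a atTop atTop := by
  have h2 : ∀ᶠ n : ℕ in atTop, θ / 2 * n ≤ a n := by
    filter_upwards [ha.eventually (eventually_gt_nhds (by linarith : θ / 2 < θ)),
      eventually_ge_atTop 1] with n hn hn1
    have hn0 : (0:ℝ) < n := by exact_mod_cast hn1
    have := (lt_div_iff₀ hn0).1 hn
    linarith
  exact tendsto_atTop_mono' atTop h2
    ((tendsto_natCast_atTop_atTop).const_mul_atTop (by linarith : (0:ℝ) < θ / 2))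

private lemma aux_bddAbove {a : ℕ → ℝ} (hA : Tendsto a atTop atTop) (s : ℝ) :
    BddAbove {k : ℕ | a k ≤ s} := by
  obtain ⟨K, hK⟩ := eventually_atTop.1 (hA.eventually_gt_atTop s)
  exact ⟨K, fun k hk => le_of_not_gt fun h => absurd (hK k h.le) (not_lt.2 hk)⟩

private lemma aux_le {a : ℕ → ℝ} (h0 : a 0 = 0) (hA : Tendsto a atTop atTop)
    {s : ℝ} (hs : 0 ≤ s) : a (sSup {k : ℕ | a k ≤ s}) ≤ s :=
  Nat.sSup_mem ⟨0, by simpa [h0]⟩ (aux_bddAbove hA s)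

private lemma aux_lt {a : ℕ → ℝ} (hA : Tendsto a atTop atTop) (s : ℝ) :
    s < a (sSup {k : ℕ | a k ≤ s} + 1) := by
  by_contra h
  push_neg at h
  have := le_csSup (aux_bddAbove hA s) (show sSup {k : ℕ | a k ≤ s} + 1 ∈ {k : ℕ | a k ≤ s} from h)
  omega

private lemma det_inv {a : ℕ → ℝ} {θ t : ℝ} (m : ℕ → ℕ)
    (ha : Tendsto (fun n : ℕ => a n / n) atTop (𝓝 θ)) (hθ : 0 < θ) (htpos : 0 < t)
    (hmem : ∀ n : ℕ, a (m n) ≤ (n:ℝ) * t)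
    (hsucc : ∀ n : ℕ, (n:ℝ) * t < a (m n + 1))
    (hmtop : Tendsto m atTop atTop) :
    Tendsto (fun n : ℕ => ((m n : ℕ) : ℝ) / n) atTop (𝓝 (t / θ)) := by
  have hmc : Tendsto (fun n => ((m n : ℕ) : ℝ)) atTop atTop :=
    tendsto_natCast_atTop_atTop.comp hmtop
  have h1 : Tendsto (fun n => a (m n) / (m n : ℝ)) atTop (𝓝 θ) := ha.comp hmtop
  have h1' : Tendsto (fun n => a (m n + 1) / ((m n : ℝ) + 1)) atTop (𝓝 θ) := by
    have hs : Tendsto (fun n => m n + 1) atTop atTop :=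
      tendsto_atTop_mono (fun n => Nat.le_succ (m n)) hmtop
    have h := ha.comp hs
    apply h.congr
    intro n
    simp only [Function.comp_apply]
    push_cast
    ring_nf
  have h2 : Tendsto (fun n => ((m n : ℝ) + 1) / (m n : ℝ)) atTop (𝓝 1) := by
    have h3 : Tendsto (fun n => 1 + ((m n : ℝ))⁻¹) atTop (𝓝 (1 + 0)) :=
      tendsto_const_nhds.add hmc.inv_tendsto_atTop
    rw [add_zero] at h3
    apply h3.congr'
    filter_upwards [hmtop.eventually_ge_atTop 1] with n hn
    have hmn : (0:ℝ) < (m n : ℝ) := by exact_mod_cast hn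
    field_simp
  have h3 : Tendsto (fun n : ℕ => (n:ℝ) * t / (m n : ℝ)) atTop (𝓝 θ) := by
    have hub : Tendsto (fun n => a (m n + 1) / ((m n : ℝ) + 1) * (((m n : ℝ) + 1) / (m n : ℝ)))
        atTop (𝓝 (θ * 1)) := h1'.mul h2
    rw [mul_one] at hub
    apply tendsto_of_tendsto_of_tendsto_of_le_of_le' h1 hub
    · filter_upwards [hmtop.eventually_ge_atTop 1] with n hn
      have hmn : (0:ℝ) < (m n : ℝ) := by exact_mod_cast hn
      exact div_le_div_of_nonneg_right (hmem n) hmn.le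
    · filter_upwards [hmtop.eventually_ge_atTop 1] with n hn
      have hmn : (0:ℝ) < (m n : ℝ) := by exact_mod_cast hn
      have hm1 : (0:ℝ) < (m n : ℝ) + 1 := by positivity
      have heq : a (m n + 1) / ((m n : ℝ) + 1) * (((m n : ℝ) + 1) / (m n : ℝ))
          = a (m n + 1) / (m n : ℝ) := by
        field_simp
      rw [heq]
      exact div_le_div_of_nonneg_right (hsucc n).le hmn.le
  have h5 : Tendsto (fun n : ℕ => t / ((n:ℝ) * t / (m n : ℝ))) atTop (𝓝 (t / θ)) :=
    tendsto_const_nhds.div h3 (ne_of_gt hθ)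
  apply h5.congr'
  filter_upwards [hmtop.eventually_ge_atTop 1, eventually_ge_atTop 1] with n hn hn1
  have hmn : (0:ℝ) < (m n : ℝ) := by exact_mod_cast hn
  have hn0 : (0:ℝ) < (n : ℝ) := by exact_mod_cast hn1
  have ht0 : t ≠ 0 := ne_of_gt htpos
  field_simp

private lemma det_tendsto {a : ℕ → ℝ} {θ : ℝ} (hm : StrictMono a) (h0 : a 0 = 0)
    (ha : Tendsto (fun n : ℕ => a n / n) atTop (𝓝 θ)) (hθ : 0 < θ) {t : ℝ} (ht : 0 ≤ t) :
    Tendsto (fun n : ℕ => ((sSup {k : ℕ | a k ≤ (n:ℝ) * t} : ℕ) : ℝ) / n) atTop (𝓝 (t / θ)) := by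
  have hA := aux_tendsto_atTop hθ ha
  rcases eq_or_lt_of_le ht with ht0 | htpos
  · -- t = 0
    obtain rfl : t = 0 := ht0.symm
    have hset : ∀ n : ℕ, sSup {k : ℕ | a k ≤ (n:ℝ) * 0} = 0 := by
      intro n
      have hs : {k : ℕ | a k ≤ (n:ℝ) * 0} = {0} := by
        ext k
        simp only [Set.mem_setOf_eq, Set.mem_singleton_iff, mul_zero]
        rw [← h0, hm.le_iff_le]
        omega
      rw [hs, csSup_singleton]
    simp only [hset, Nat.cast_zero, zero_div]
    simpa using (tendsto_const_nhds : Tendsto (fun _ : ℕ => (0:ℝ)) atTop (𝓝 0))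
  · apply det_inv (fun n => sSup {k : ℕ | a k ≤ (n:ℝ) * t}) ha hθ htpos
    · exact fun n => aux_le h0 hA (by positivity)
    · exact fun n => aux_lt hA _
    · rw [tendsto_atTop]
      intro C
      have h1 : Tendsto (fun n : ℕ => (n:ℝ) * t) atTop atTop :=
        (tendsto_natCast_atTop_atTop).atTop_mul_const htpos
      filter_upwards [h1.eventually_ge_atTop (a C)] with n hn
      exact le_csSup (aux_bddAbove hA _) hn

private lemma N_measurable {Ω : Type*} [MeasurableSpace Ω] {T : ℕ → Ω → ℝ}
    (hTm : ∀ n, Measurable (T n)) (hTmono : ∀ ω, StrictMono (fun n => T n ω)) (s : ℝ) :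
    Measurable (fun ω => (sSup {k : ℕ | T k ω ≤ s} : ℕ)) := by
  have key : ∀ k : ℕ, (fun ω => sSup {n : ℕ | T n ω ≤ s}) ⁻¹' {k + 1}
      = {ω | T (k+1) ω ≤ s} ∩ {ω | s < T (k+2) ω} := by
    intro k
    ext ω
    simp only [Set.mem_preimage, Set.mem_singleton_iff, Set.mem_inter_iff, Set.mem_setOf_eq]
    constructor
    · intro h
      by_cases hb : BddAbove {n : ℕ | T n ω ≤ s}
      · by_cases hne : {n : ℕ | T n ω ≤ s}.Nonempty
        · have hmem := Nat.sSup_mem hne hb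
          rw [h] at hmem
          refine ⟨hmem, ?_⟩
          by_contra hlt
          push_neg at hlt
          have h2 := le_csSup hb (show k + 2 ∈ {n : ℕ | T n ω ≤ s} from hlt)
          rw [h] at h2
          omega
        · rw [Set.not_nonempty_iff_eq_empty] at hne
          rw [hne, csSup_empty] at h
          simp at h
      · rw [csSup_of_not_bddAbove hb, csSup_empty] at h
        simp at h
    · rintro ⟨h1, h2⟩
      have hub : ∀ n ∈ {n : ℕ | T n ω ≤ s}, n ≤ k + 1 := by
        intro n hn
        by_contra hgt
        push_neg at hgt
        have h3 : T (k+2) ω ≤ T n ω := (hTmono ω).monotone (by omega : k + 2 ≤ n)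
        exact absurd (le_trans h3 hn) (not_le.2 h2)
      exact le_antisymm (csSup_le ⟨k+1, h1⟩ hub) (le_csSup ⟨k+1, hub⟩ h1)
  have hkm : ∀ k : ℕ, MeasurableSet ((fun ω => sSup {n : ℕ | T n ω ≤ s}) ⁻¹' {k + 1}) := by
    intro k
    rw [key k]
    exact (measurableSet_le (hTm _) measurable_const).inter
      (measurableSet_lt measurable_const (hTm _))
  apply measurable_to_countable'
  intro k
  match k with
  | 0 =>
      have h0 : (fun ω => sSup {n : ℕ | T n ω ≤ s}) ⁻¹' {0}
          = (⋃ k : ℕ, (fun ω => sSup {n : ℕ | T n ω ≤ s}) ⁻¹' {k + 1})ᶜ := by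
        ext ω
        simp only [Set.mem_preimage, Set.mem_singleton_iff, Set.mem_compl_iff, Set.mem_iUnion]
        constructor
        · rintro h ⟨k, hk⟩
          omega
        · intro h
          rcases Nat.eq_zero_or_pos (sSup {n : ℕ | T n ω ≤ s}) with h0 | h0
          · exact h0
          · exact absurd ⟨sSup {n : ℕ | T n ω ≤ s} - 1, by omega⟩ h
      rw [h0]
      exact (MeasurableSet.iUnion hkm).compl
  | (k+1) => exact hkm k

/-- **Renewal LLN, uniform on compacts, in probability.**
For the renewal process `N_t = sup{n : τ₁ + ⋯ + τₙ ≤ t}` built from i.i.d.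
square-integrable positive inter-arrival times `τₙ` with `θ = E[τ₁]`, for
every `M > 0` and every `ε > 0`, the probability that
`|N_{nt}/n − t/θ| > ε` for some `t ∈ [0,M]` tends to `0` as `n → ∞`. -/
theorem renewal_uniform_lln
    {Ω : Type*} [MeasurableSpace Ω] (P : Measure Ω) [IsProbabilityMeasure P]
    (τ : ℕ → Ω → ℝ)
    (hmeas : ∀ n, Measurable (τ n))
    (hindep : iIndepFun τ P)
    (hident : ∀ n, IdentDistrib (τ n) (τ 0) P P)
    (hpos : ∀ n ω, 0 < τ n ω)
    (hL2 : MemLp (τ 0) 2 P)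
    (θ : ℝ) (hθ : θ = ∫ ω, τ 0 ω ∂P)
    (T : ℕ → Ω → ℝ) (hT : ∀ n ω, T n ω = ∑ i ∈ Finset.range n, τ i ω)
    (N : ℝ → Ω → ℕ) (hN : ∀ t ω, N t ω = sSup {n : ℕ | T n ω ≤ t}) :
    ∀ M > (0:ℝ), ∀ ε > (0:ℝ),
      Tendsto
        (fun n : ℕ =>
          P {ω | ∃ t ∈ Set.Icc (0:ℝ) M, ε < |(N (n * t) ω : ℝ) / n - t / θ|})
        atTop (𝓝 0) := by
  intro M hM ε hε
  have hInt : Integrable (τ 0) P := hL2.integrable one_le_two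
  have hT0 : ∀ ω, T 0 ω = 0 := fun ω => by simp [hT]
  have hTsm : ∀ ω, StrictMono (fun n => T n ω) := by
    intro ω
    apply strictMono_nat_of_lt_succ
    intro n
    simp only [hT, Finset.sum_range_succ]
    exact lt_add_of_pos_right _ (hpos n ω)
  have hTm : ∀ n, Measurable (T n) := by
    intro n
    have h : T n = fun ω => ∑ i ∈ Finset.range n, τ i ω := funext fun ω => hT n ω
    rw [h]
    exact Finset.measurable_sum _ (fun i _ => hmeas i)
  have hθpos : 0 < θ := by
    rw [hθ]
    rcases (integral_nonneg (f := τ 0) (fun ω => (hpos 0 ω).le)).lt_or_eq with h | h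
    · exact h
    · exfalso
      have hz : τ 0 =ᵐ[P] 0 :=
        (integral_eq_zero_iff_of_nonneg (fun ω => (hpos 0 ω).le) hInt).1 h.symm
      have hz' : ∀ᵐ ω ∂P, τ 0 ω = 0 := hz
      have h2 : P {ω | ¬ τ 0 ω = 0} = 0 := ae_iff.1 hz'
      have h3 : {ω | ¬ τ 0 ω = 0} = Set.univ := by
        ext ω; simp [(hpos 0 ω).ne']
      rw [h3, measure_univ] at h2
      exact one_ne_zero h2
  have hpair : Pairwise (Function.onFun (IndepFun · · P) τ) := fun i j hij => hindep.indepFun hij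
  have hslln : ∀ᵐ ω ∂P, Tendsto (fun n : ℕ => T n ω / n) atTop (𝓝 θ) := by
    filter_upwards [strong_law_ae_real τ hInt hpair hident] with ω hω
    rw [hθ]
    have h : (fun n : ℕ => T n ω / n) = fun n : ℕ => (∑ i ∈ Finset.range n, τ i ω) / n := by
      funext n; rw [hT]
    rw [h]
    exact hω
  have hNmeas : ∀ s : ℝ, Measurable fun ω => (N s ω : ℝ) := by
    intro s
    have h1 : Measurable fun ω => N s ω := by
      have h : (fun ω => N s ω) = fun ω => sSup {k : ℕ | T k ω ≤ s} := funext fun ω => hN s ω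
      rw [h]
      exact N_measurable hTm hTsm s
    exact measurable_from_top.comp h1
  -- grid constants
  set K : ℕ := max 1 ⌈2 * M / (ε * θ)⌉₊ with hK
  have hK1 : 1 ≤ K := le_max_left _ _
  have hKpos : (0:ℝ) < K := by exact_mod_cast hK1
  have hKbig : M / (K * θ) ≤ ε / 2 := by
    have h1 : 2 * M / (ε * θ) ≤ (K:ℝ) := by
      refine le_trans (Nat.le_ceil _) ?_
      exact_mod_cast le_max_right 1 ⌈2 * M / (ε * θ)⌉₊
    rw [div_le_div_iff₀ (by positivity) (by norm_num)]
    have h2 : 2 * M ≤ (K:ℝ) * (ε * θ) := by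
      rwa [div_le_iff₀ (by positivity)] at h1
    nlinarith
  set tg : ℕ → ℝ := fun j => j * M / K with htg
  have htgnn : ∀ j, 0 ≤ tg j := fun j => by positivity
  set B : Set Ω := {ω | ¬ Tendsto (fun n : ℕ => T n ω / n) atTop (𝓝 θ)} with hB'
  have hB : P B = 0 := ae_iff.1 hslln
  set D : ℕ → ℕ → Set Ω :=
    fun n j => {ω | ε / 2 ≤ dist ((N ((n:ℝ) * tg j) ω : ℝ) / n) (tg j / θ)} with hD'
  have htm : ∀ j : ℕ, Tendsto (fun n => P (D n j)) atTop (𝓝 0) := by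
    intro j
    have hae : ∀ᵐ ω ∂P,
        Tendsto (fun n : ℕ => (N ((n:ℝ) * tg j) ω : ℝ) / n) atTop (𝓝 (tg j / θ)) := by
      filter_upwards [hslln] with ω hω
      have h : (fun n : ℕ => (N ((n:ℝ) * tg j) ω : ℝ) / n)
          = fun n : ℕ => ((sSup {k : ℕ | T k ω ≤ (n:ℝ) * tg j} : ℕ) : ℝ) / n := by
        funext n; rw [hN]
      rw [h]
      exact det_tendsto (hTsm ω) (hT0 ω) hω hθpos (htgnn j)
    have h := tendstoInMeasure_of_tendsto_ae
      (f := fun (n : ℕ) ω => (N ((n:ℝ) * tg j) ω : ℝ) / n) (g := fun _ => tg j / θ)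
      (fun n => ((hNmeas _).div_const _).aestronglyMeasurable) hae
    exact tendstoInMeasure_iff_dist.1 h (ε / 2) (by positivity)
  -- the inclusion
  have hincl : ∀ n : ℕ, 1 ≤ n →
      {ω | ∃ t ∈ Set.Icc (0:ℝ) M, ε < |(N (n * t) ω : ℝ) / n - t / θ|}
        ⊆ B ∪ ⋃ j ∈ Finset.range (K + 1), D n j := by
    intro n hn1 ω hω
    obtain ⟨t, ⟨ht0, htM⟩, hbig⟩ := hω
    by_contra hc
    rw [Set.mem_union] at hc
    push_neg at hc
    obtain ⟨hgood', hD2⟩ := hc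
    have hgood : Tendsto (fun k : ℕ => T k ω / k) atTop (𝓝 θ) := by
      by_contra hcon
      exact hgood' hcon
    have hDlt : ∀ j : ℕ, j ≤ K → dist ((N ((n:ℝ) * tg j) ω : ℝ) / n) (tg j / θ) < ε / 2 := by
      intro j hj
      by_contra hcon
      push_neg at hcon
      exact hD2 (Set.mem_iUnion₂.2 ⟨j, Finset.mem_range.2 (by omega), hcon⟩)
    have hA : Tendsto (fun k => T k ω) atTop atTop := aux_tendsto_atTop hθpos hgood
    have hbdd := aux_bddAbove hA
    have hnpos : (0:ℝ) < n := by exact_mod_cast hn1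
    have hmono : ∀ s s' : ℝ, 0 ≤ s → s ≤ s' → (N s ω : ℝ) / n ≤ (N s' ω : ℝ) / n := by
      intro s s' hs hss'
      have h1 : N s ω ≤ N s' ω := by
        rw [hN, hN]
        refine csSup_le_csSup (hbdd s') ⟨0, ?_⟩ (fun k hk => le_trans hk hss')
        show T 0 ω ≤ s
        rw [hT0]
        exact hs
      exact div_le_div_of_nonneg_right (by exact_mod_cast h1) hnpos.le
    set j : ℕ := min (⌊t * K / M⌋₊) (K - 1) with hj'
    have hjK : j + 1 ≤ K := by
      have h := min_le_right (⌊t * K / M⌋₊) (K - 1)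
      omega
    have htj : tg j ≤ t := by
      have h1 : (j : ℝ) ≤ t * K / M := by
        refine le_trans ?_ (Nat.floor_le (by positivity))
        exact_mod_cast min_le_left (⌊t * K / M⌋₊) (K - 1)
      show (j : ℝ) * M / K ≤ t
      rw [div_le_iff₀ hKpos]
      have h2 := (le_div_iff₀ hM).1 h1
      linarith
    have htj1 : t ≤ tg (j + 1) := by
      have hcast : tg (j + 1) = ((j:ℝ) + 1) * M / K := by
        show ((j + 1 : ℕ) : ℝ) * M / K = ((j:ℝ) + 1) * M / K
        push_cast
        ring
      rw [hcast]
      rcases le_or_gt (⌊t * K / M⌋₊) (K - 1) with h | h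
      · have hjeq : j = ⌊t * K / M⌋₊ := min_eq_left h
        have h2 : t * K / M < (⌊t * K / M⌋₊ : ℝ) + 1 := Nat.lt_floor_add_one _
        rw [le_div_iff₀ hKpos, hjeq]
        have h3 := (div_lt_iff₀ hM).1 h2
        linarith
      · have hjeq : j = K - 1 := min_eq_right h.le
        have hj1 : ((j:ℝ) + 1) = K := by
          have hn : j + 1 = K := by omega
          exact_mod_cast hn
        have hKM : ((K:ℝ)) * M / K = M := by field_simp
        rw [hj1, hKM]
        exact htM
    have hstep : tg (j + 1) - tg j = M / K := by
      show ((j + 1 : ℕ) : ℝ) * M / K - (j : ℝ) * M / K = M / K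
      push_cast
      field_simp
      ring
    have hdj := hDlt j (by omega)
    have hdj1 := hDlt (j + 1) hjK
    rw [Real.dist_eq, abs_sub_lt_iff] at hdj hdj1
    have hub : (N ((n:ℝ) * t) ω : ℝ) / n - t / θ ≤ ε := by
      have h1 : (N ((n:ℝ) * t) ω : ℝ) / n ≤ (N ((n:ℝ) * tg (j+1)) ω : ℝ) / n :=
        hmono _ _ (by positivity) (mul_le_mul_of_nonneg_left htj1 hnpos.le)
      have e1 : tg (j+1) ≤ t + M / K := by linarith
      have e2 : tg (j+1) / θ ≤ (t + M / K) / θ := div_le_div_of_nonneg_right e1 hθpos.le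
      have e3 : (t + M / K) / θ = t / θ + M / (K * θ) := by rw [add_div]; simp only [div_div]
      linarith [hdj1.1]
    have hlb : t / θ - (N ((n:ℝ) * t) ω : ℝ) / n ≤ ε := by
      have h1 : (N ((n:ℝ) * tg j) ω : ℝ) / n ≤ (N ((n:ℝ) * t) ω : ℝ) / n :=
        hmono _ _ (by positivity) (mul_le_mul_of_nonneg_left htj hnpos.le)
      have e1 : t ≤ tg j + M / K := by linarith
      have e2 : t / θ ≤ (tg j + M / K) / θ := div_le_div_of_nonneg_right e1 hθpos.le
      have e3 : (tg j + M / K) / θ = tg j / θ + M / (K * θ) := by rw [add_div]; simp only [div_div]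
      linarith [hdj.2]
    have habs : |(N ((n:ℝ) * t) ω : ℝ) / n - t / θ| ≤ ε :=
      abs_le.2 ⟨by linarith, by linarith⟩
    exact absurd hbig (not_lt.2 habs)
  have hupper : ∀ᶠ n : ℕ in atTop,
      P {ω | ∃ t ∈ Set.Icc (0:ℝ) M, ε < |(N (n * t) ω : ℝ) / n - t / θ|}
        ≤ P B + ∑ j ∈ Finset.range (K + 1), P (D n j) := by
    filter_upwards [eventually_ge_atTop 1] with n hn
    calc P {ω | ∃ t ∈ Set.Icc (0:ℝ) M, ε < |(N (n * t) ω : ℝ) / n - t / θ|}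
        ≤ P (B ∪ ⋃ j ∈ Finset.range (K + 1), D n j) := measure_mono (hincl n hn)
      _ ≤ P B + P (⋃ j ∈ Finset.range (K + 1), D n j) := measure_union_le _ _
      _ ≤ P B + ∑ j ∈ Finset.range (K + 1), P (D n j) :=
          add_le_add le_rfl (measure_biUnion_finset_le _ _)
  have hlim : Tendsto (fun n : ℕ => P B + ∑ j ∈ Finset.range (K + 1), P (D n j))
      atTop (𝓝 0) := by
    have h1 : Tendsto (fun n : ℕ => ∑ j ∈ Finset.range (K + 1), P (D n j)) atTop
        (𝓝 (∑ _j ∈ Finset.range (K + 1), (0:ENNReal))) :=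
      tendsto_finset_sum _ (fun j _ => htm j)
    rw [Finset.sum_const_zero] at h1
    simp only [hB, zero_add]
    exact h1
  exact tendsto_of_tendsto_of_tendsto_of_le_of_le' tendsto_const_nhds hlim
    (Eventually.of_forall fun n => zero_le) hupper
end

section
/- For the renewal process built from i.i.d. square-integrable positive inter-arrival times τ_n, for every M > 0 one has sup_{t ∈ [0,M]} |T_{N_{nt}} − nt| / √n → 0 in probability as n → ∞, where we set T₀ = 0. -/
/-!
For a renewal process with i.i.d. square-integrable positive inter-arrival
times, the overshoot `|T_{N_{nt}} − nt|` is uniformly `o(√n)` on compact time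
intervals, in probability.
-/

open MeasureTheory ProbabilityTheory Filter Set Topology

/-- **Renewal overshoot is negligible on the diffusive scale.**
For the renewal process `N_t = sup{n : τ₁ + ⋯ + τₙ ≤ t}` built from i.i.d.
square-integrable positive inter-arrival times `τₙ`, for every `M > 0` one
has `sup_{t ∈ [0,M]} |T_{N_{nt}} − nt| / √n → 0` in probability as `n → ∞`
(with `T₀ = 0`). -/
theorem renewal_overshoot_diffusive_negligible
    {Ω : Type*} [MeasurableSpace Ω] (P : Measure Ω) [IsProbabilityMeasure P]
    (τ : ℕ → Ω → ℝ)
    (hmeas : ∀ n, Measurable (τ n))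
    (hindep : iIndepFun τ P)
    (hident : ∀ n, IdentDistrib (τ n) (τ 0) P P)
    (hpos : ∀ n ω, 0 < τ n ω)
    (hL2 : MemLp (τ 0) 2 P)
    (T : ℕ → Ω → ℝ) (hT : ∀ n ω, T n ω = ∑ i ∈ Finset.range n, τ i ω)
    (N : ℝ → Ω → ℕ) (hN : ∀ t ω, N t ω = sSup {n : ℕ | T n ω ≤ t}) :
    ∀ M > (0:ℝ), ∀ ε > (0:ℝ),
      Tendsto
        (fun n : ℕ =>
          P {ω | ∃ t ∈ Set.Icc (0:ℝ) M,
            ε < |T (N (n * t) ω) ω - n * t| / Real.sqrt n})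
        atTop (𝓝 0) := by
  intro M hM ε hε
  classical
  have hτint : Integrable (τ 0) P := hL2.integrable one_le_two
  have hτm : ∀ n, MemLp (τ n) 2 P := fun n => (hident n).symm.memLp_snd hL2
  set θ : ℝ := ∫ ω, τ 0 ω ∂P with hθdef
  have hθpos : 0 < θ := by
    rw [hθdef, integral_pos_iff_support_of_nonneg (fun ω => (hpos 0 ω).le) hτint]
    have hsupp : Function.support (τ 0) = Set.univ :=
      Set.eq_univ_of_forall (fun ω => (hpos 0 ω).ne')
    simp [hsupp]
  obtain ⟨K, hK⟩ : ∃ K : ℕ, M < K * θ := by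
    obtain ⟨K, hK⟩ := exists_nat_gt (M / θ)
    exact ⟨K, by rwa [div_lt_iff₀ hθpos] at hK⟩
  set δ : ℝ := K * θ - M with hδdef
  have hδpos : 0 < δ := by rw [hδdef]; linarith
  set V : ℝ := variance (τ 0) P with hVdef
  -- monotonicity of T
  have hTmono : ∀ ω, ∀ m₁ m₂ : ℕ, m₁ ≤ m₂ → T m₁ ω ≤ T m₂ ω := by
    intro ω m₁ m₂ h
    rw [hT, hT]
    exact Finset.sum_le_sum_of_subset_of_nonneg (Finset.range_subset_range.2 h)
      (fun i _ _ => (hpos i ω).le)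
  -- the tail integral of τ₀²
  set q : ℕ → ℝ := fun n => ∫ x in (τ 0 ⁻¹' Set.Ioi (ε * Real.sqrt n)), (τ 0 x) ^ 2 ∂P
    with hqdef
  have hq_nonneg : ∀ n, 0 ≤ q n := fun n =>
    setIntegral_nonneg (measurableSet_preimage (hmeas 0) measurableSet_Ioi)
      (fun x _ => sq_nonneg _)
  -- ε √n → ∞
  have hsqrt_tendsto : Tendsto (fun n : ℕ => ε * Real.sqrt n) atTop atTop := by
    rw [tendsto_atTop_atTop]
    intro b
    refine ⟨⌈(b / ε) ^ 2⌉₊, fun n hn => ?_⟩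
    have h1 : (b / ε) ^ 2 ≤ (n : ℝ) := le_trans (Nat.le_ceil _) (Nat.cast_le.2 hn)
    have h2 : b / ε ≤ Real.sqrt n := by
      calc b / ε ≤ |b / ε| := le_abs_self _
        _ = Real.sqrt ((b / ε) ^ 2) := (Real.sqrt_sq_eq_abs _).symm
        _ ≤ Real.sqrt n := Real.sqrt_le_sqrt h1
    have := mul_le_mul_of_nonneg_left h2 hε.le
    calc b = ε * (b / ε) := by field_simp
      _ ≤ ε * Real.sqrt n := this
  -- q n → 0 by dominated convergence
  have hq0 : Tendsto q atTop (𝓝 0) := by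
    have hAmeas : ∀ n : ℕ, MeasurableSet (τ 0 ⁻¹' Set.Ioi (ε * Real.sqrt n)) :=
      fun n => measurableSet_preimage (hmeas 0) measurableSet_Ioi
    have hqeq : ∀ n : ℕ, q n =
        ∫ x, (τ 0 ⁻¹' Set.Ioi (ε * Real.sqrt n)).indicator (fun ω => τ 0 ω ^ 2) x ∂P := by
      intro n
      rw [hqdef]
      exact (integral_indicator (hAmeas n)).symm
    have hDCT : Tendsto
        (fun n : ℕ => ∫ x, (τ 0 ⁻¹' Set.Ioi (ε * Real.sqrt n)).indicator
          (fun ω => τ 0 ω ^ 2) x ∂P) atTop (𝓝 (∫ _x, (0:ℝ) ∂P)) := by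
      apply tendsto_integral_of_dominated_convergence (fun ω => τ 0 ω ^ 2)
      · intro n
        exact ((hmeas 0).pow_const 2).indicator (hAmeas n) |>.aestronglyMeasurable
      · exact hL2.integrable_sq
      · intro n
        filter_upwards with ω
        by_cases h : ω ∈ τ 0 ⁻¹' Set.Ioi (ε * Real.sqrt n)
        · simp [Set.indicator_of_mem h, abs_of_nonneg (sq_nonneg (τ 0 ω))]
        · simp [Set.indicator_of_notMem h, sq_nonneg]
      · filter_upwards with ω
        have hev : ∀ᶠ n : ℕ in atTop, ω ∉ τ 0 ⁻¹' Set.Ioi (ε * Real.sqrt n) := by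
          filter_upwards [hsqrt_tendsto.eventually_ge_atTop (τ 0 ω)] with n hn
          simp only [Set.mem_preimage, Set.mem_Ioi, not_lt]
          exact hn
        apply Tendsto.congr' _ tendsto_const_nhds
        filter_upwards [hev] with n hn
        exact (Set.indicator_of_notMem hn _).symm
    have hDCT' : Tendsto
        (fun n : ℕ => ∫ x, (τ 0 ⁻¹' Set.Ioi (ε * Real.sqrt n)).indicator
          (fun ω => τ 0 ω ^ 2) x ∂P) atTop (𝓝 0) := by simpa using hDCT
    exact hDCT'.congr (fun n => (hqeq n).symm)
  -- Markov bound for the tail probability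
  have hmark : ∀ n : ℕ, 1 ≤ n →
      P (τ 0 ⁻¹' Set.Ioi (ε * Real.sqrt n)) ≤ ENNReal.ofReal (q n / (ε ^ 2 * n)) := by
    intro n hn
    set a : ℝ := ε * Real.sqrt n with hadef
    have hnpos : (0:ℝ) < n := by exact_mod_cast hn
    have hsq : Real.sqrt n > 0 := Real.sqrt_pos.2 hnpos
    have ha : 0 < a := mul_pos hε hsq
    have ha2 : a ^ 2 = ε ^ 2 * n := by
      rw [hadef, mul_pow, Real.sq_sqrt hnpos.le]
    have hA : MeasurableSet (τ 0 ⁻¹' Set.Ioi a) :=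
      measurableSet_preimage (hmeas 0) measurableSet_Ioi
    have hfin : P (τ 0 ⁻¹' Set.Ioi a) ≠ ⊤ := measure_ne_top _ _
    have hconst : ∀ x ∈ τ 0 ⁻¹' Set.Ioi a, a ^ 2 ≤ τ 0 x ^ 2 := by
      intro x hx
      have : a ≤ τ 0 x := le_of_lt hx
      exact pow_le_pow_left₀ ha.le this 2
    have hint : IntegrableOn (fun x => τ 0 x ^ 2) (τ 0 ⁻¹' Set.Ioi a) P :=
      hL2.integrable_sq.integrableOn
    have hkey := setIntegral_ge_of_const_le hA hfin hconst hint
    have htr : (P (τ 0 ⁻¹' Set.Ioi a)).toReal ≤ q n / (ε ^ 2 * n) := by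
      rw [← ha2]
      rw [le_div_iff₀ (by positivity)]
      calc (P (τ 0 ⁻¹' Set.Ioi a)).toReal * a ^ 2
          = a ^ 2 * (P (τ 0 ⁻¹' Set.Ioi a)).toReal := by ring
        _ ≤ q n := by rw [smul_eq_mul, measureReal_def, mul_comm] at hkey; exact hkey
    calc P (τ 0 ⁻¹' Set.Ioi a) = ENNReal.ofReal ((P (τ 0 ⁻¹' Set.Ioi a)).toReal) :=
          (ENNReal.ofReal_toReal hfin).symm
      _ ≤ ENNReal.ofReal (q n / (ε ^ 2 * n)) := ENNReal.ofReal_le_ofReal htr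
  -- Chebyshev bound for the event that T is small
  have hcheb : ∀ n : ℕ, 1 ≤ n →
      P {ω | T (K * n) ω ≤ n * M} ≤ ENNReal.ofReal (K * V / (δ ^ 2 * n)) := by
    intro n hn
    have hnpos : (0:ℝ) < n := by exact_mod_cast hn
    set m := K * n with hmdef
    let Y : Ω → ℝ := ∑ i ∈ Finset.range m, τ i
    have hYapp : ∀ ω, Y ω = ∑ i ∈ Finset.range m, τ i ω := by
      intro ω; simp [Y, Finset.sum_apply]
    have hY2 : MemLp Y 2 P := memLp_finset_sum' _ (fun i _ => hτm i)
    have hEY : P[Y] = m * θ := by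
      have : P[Y] = ∫ ω, ∑ i ∈ Finset.range m, τ i ω ∂P :=
        integral_congr_ae (Filter.Eventually.of_forall (fun ω => hYapp ω))
      rw [this, integral_finset_sum _ (fun i _ => ((hτm i).integrable one_le_two))]
      have h3 : ∀ i ∈ Finset.range m, ∫ ω, τ i ω ∂P = θ := by
        intro i _
        exact (hident i).integral_eq
      rw [Finset.sum_congr rfl h3]
      simp [mul_comm]
    have hVY : variance Y P = m * V := by
      have : variance Y P = ∑ i ∈ Finset.range m, variance (τ i) P :=
        IndepFun.variance_sum (fun i _ => hτm i)
          (fun i _ j _ hij => hindep.indepFun hij)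
      rw [this]
      have h3 : ∀ i ∈ Finset.range m, variance (τ i) P = V := by
        intro i _
        exact (hident i).variance_eq
      rw [Finset.sum_congr rfl h3]
      simp [mul_comm]
    set c : ℝ := n * δ with hcdef
    have hc : 0 < c := mul_pos hnpos hδpos
    have hsub : {ω | T m ω ≤ n * M} ⊆ {ω | c ≤ |Y ω - P[Y]|} := by
      intro ω hω
      simp only [Set.mem_setOf_eq] at hω ⊢
      have hYT : Y ω = T m ω := by rw [hYapp, hT]
      have h1 : P[Y] - Y ω ≥ c := by
        rw [hEY, hYT, hcdef, hδdef, hmdef]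
        push_cast
        nlinarith [hω]
      calc c ≤ P[Y] - Y ω := h1
        _ ≤ |P[Y] - Y ω| := le_abs_self _
        _ = |Y ω - P[Y]| := abs_sub_comm _ _
    have hchev := meas_ge_le_variance_div_sq (μ := P) hY2 hc
    have heq : variance Y P / c ^ 2 = K * V / (δ ^ 2 * n) := by
      rw [hVY, hcdef, hmdef]
      push_cast
      field_simp
    calc P {ω | T m ω ≤ n * M} ≤ P {ω | c ≤ |Y ω - P[Y]|} := measure_mono hsub
      _ ≤ ENNReal.ofReal (variance Y P / c ^ 2) := hchev
      _ = ENNReal.ofReal (K * V / (δ ^ 2 * n)) := by rw [heq]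
  -- union bound for the maximum of the τ's
  have hBmax : ∀ n : ℕ,
      P {ω | ∃ k < K * n, ε * Real.sqrt n < τ k ω}
        ≤ (K * n : ℕ) * P (τ 0 ⁻¹' Set.Ioi (ε * Real.sqrt n)) := by
    intro n
    have hsub : {ω | ∃ k < K * n, ε * Real.sqrt n < τ k ω}
        ⊆ ⋃ k ∈ Finset.range (K * n), τ k ⁻¹' Set.Ioi (ε * Real.sqrt n) := by
      intro ω hω
      obtain ⟨k, hk, hkω⟩ := hω
      exact Set.mem_biUnion (Finset.mem_range.2 hk) hkω
    calc P {ω | ∃ k < K * n, ε * Real.sqrt n < τ k ω}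
        ≤ P (⋃ k ∈ Finset.range (K * n), τ k ⁻¹' Set.Ioi (ε * Real.sqrt n)) :=
          measure_mono hsub
      _ ≤ ∑ k ∈ Finset.range (K * n), P (τ k ⁻¹' Set.Ioi (ε * Real.sqrt n)) :=
          measure_biUnion_finset_le _ _
      _ = ∑ k ∈ Finset.range (K * n), P (τ 0 ⁻¹' Set.Ioi (ε * Real.sqrt n)) := by
          refine Finset.sum_congr rfl (fun k _ => ?_)
          exact (hident k).measure_mem_eq measurableSet_Ioi
      _ = (K * n : ℕ) * P (τ 0 ⁻¹' Set.Ioi (ε * Real.sqrt n)) := by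
          rw [Finset.sum_const, Finset.card_range, nsmul_eq_mul]
  -- the key deterministic inclusion
  have hincl : ∀ n : ℕ, 1 ≤ n →
      {ω | ∃ t ∈ Set.Icc (0:ℝ) M, ε < |T (N (n * t) ω) ω - n * t| / Real.sqrt n}
        ⊆ {ω | T (K * n) ω ≤ n * M} ∪ {ω | ∃ k < K * n, ε * Real.sqrt n < τ k ω} := by
    intro n hn ω hω
    obtain ⟨t, ht, hεlt⟩ := hω
    rw [Set.mem_union]
    by_contra hcon
    push_neg at hcon
    obtain ⟨h1, h2⟩ := hcon
    simp only [Set.mem_setOf_eq, not_le] at h1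
    simp only [Set.mem_setOf_eq, not_exists, not_and, not_lt] at h2
    have h2' : ∀ k, k < K * n → τ k ω ≤ ε * Real.sqrt n := fun k hk => h2 k hk
    set s : ℝ := (n : ℝ) * t with hsdef
    have hs0 : 0 ≤ s := mul_nonneg (Nat.cast_nonneg n) ht.1
    have hsM : s ≤ n * M := mul_le_mul_of_nonneg_left ht.2 (Nat.cast_nonneg n)
    have hbddS : ∀ m, T m ω ≤ s → m < K * n := by
      intro m hm
      by_contra hmk
      push_neg at hmk
      have hTm := hTmono ω (K * n) m hmk
      linarith
    have hS0 : T 0 ω ≤ s := by rw [hT]; simpa using hs0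
    have hSbdd : BddAbove {m : ℕ | T m ω ≤ s} := ⟨K * n, fun m hm => (hbddS m hm).le⟩
    have hNmem : T (N s ω) ω ≤ s := by
      have : N s ω ∈ {m : ℕ | T m ω ≤ s} := by
        rw [hN]; exact Nat.sSup_mem ⟨0, hS0⟩ hSbdd
      exact this
    have hNsucc : ¬ T (N s ω + 1) ω ≤ s := by
      intro hmem
      have hle := le_csSup hSbdd (Set.mem_setOf_eq ▸ hmem :
        N s ω + 1 ∈ {m : ℕ | T m ω ≤ s})
      rw [← hN s ω] at hle
      omega
    push_neg at hNsucc
    have hstep : T (N s ω + 1) ω = T (N s ω) ω + τ (N s ω) ω := by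
      rw [hT, hT, Finset.sum_range_succ]
    have hNlt : N s ω < K * n := hbddS _ hNmem
    have hτle : τ (N s ω) ω ≤ ε * Real.sqrt n := h2' _ hNlt
    have hnpos : (0:ℝ) < n := by exact_mod_cast hn
    have hsqpos : 0 < Real.sqrt n := Real.sqrt_pos.2 hnpos
    have habs : |T (N s ω) ω - s| < ε * Real.sqrt n := by
      rw [abs_sub_comm, abs_of_nonneg (sub_nonneg.2 hNmem)]
      linarith [hstep ▸ hNsucc]
    have hεs := (lt_div_iff₀ hsqpos).1 hεlt
    linarith
  -- assemble the bound
  have hbound : ∀ᶠ n : ℕ in atTop,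
      P {ω | ∃ t ∈ Set.Icc (0:ℝ) M,
          ε < |T (N (n * t) ω) ω - n * t| / Real.sqrt n}
        ≤ ENNReal.ofReal (K * V / (δ ^ 2 * n)) + ENNReal.ofReal (K / ε ^ 2 * q n) := by
    filter_upwards [eventually_ge_atTop 1] with n hn
    have hsub := hincl n hn
    have hBn : P {ω | ∃ k < K * n, ε * Real.sqrt n < τ k ω}
        ≤ ENNReal.ofReal (K / ε ^ 2 * q n) := by
      calc P {ω | ∃ k < K * n, ε * Real.sqrt n < τ k ω}
          ≤ (K * n : ℕ) * P (τ 0 ⁻¹' Set.Ioi (ε * Real.sqrt n)) := hBmax n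
        _ ≤ (K * n : ℕ) * ENNReal.ofReal (q n / (ε ^ 2 * n)) := by
            exact mul_le_mul_right (hmark n hn) _
        _ = ENNReal.ofReal ((K * n : ℕ) * (q n / (ε ^ 2 * n))) := by
            rw [← ENNReal.ofReal_natCast (K * n),
              ← ENNReal.ofReal_mul (Nat.cast_nonneg _)]
        _ = ENNReal.ofReal (K / ε ^ 2 * q n) := by
            congr 1
            have hnpos : (0:ℝ) < n := by exact_mod_cast hn
            push_cast
            field_simp
    calc P {ω | ∃ t ∈ Set.Icc (0:ℝ) M,
            ε < |T (N (n * t) ω) ω - n * t| / Real.sqrt n}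
        ≤ P ({ω | T (K * n) ω ≤ n * M} ∪ {ω | ∃ k < K * n, ε * Real.sqrt n < τ k ω}) :=
          measure_mono hsub
      _ ≤ P {ω | T (K * n) ω ≤ n * M} + P {ω | ∃ k < K * n, ε * Real.sqrt n < τ k ω} :=
          measure_union_le _ _
      _ ≤ ENNReal.ofReal (K * V / (δ ^ 2 * n)) + ENNReal.ofReal (K / ε ^ 2 * q n) :=
          add_le_add (hcheb n hn) hBn
  -- the upper bound tends to zero
  have h1 : Tendsto (fun n : ℕ => ENNReal.ofReal (K * V / (δ ^ 2 * n))) atTop (𝓝 0) := by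
    have hreal : Tendsto (fun n : ℕ => K * V / (δ ^ 2 * n)) atTop (𝓝 0) := by
      have := tendsto_one_div_atTop_nhds_zero_nat (𝕜 := ℝ)
      have h := this.const_mul (K * V / δ ^ 2)
      rw [mul_zero] at h
      apply h.congr
      intro n
      field_simp
    have := ENNReal.tendsto_ofReal hreal
    simpa using this
  have h2 : Tendsto (fun n : ℕ => ENNReal.ofReal (K / ε ^ 2 * q n)) atTop (𝓝 0) := by
    have hreal : Tendsto (fun n : ℕ => K / ε ^ 2 * q n) atTop (𝓝 0) := by
      have h := hq0.const_mul (K / ε ^ 2)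
      rwa [mul_zero] at h
    have := ENNReal.tendsto_ofReal hreal
    simpa using this
  have hsum := h1.add h2
  rw [add_zero] at hsum
  exact tendsto_of_tendsto_of_tendsto_of_le_of_le' tendsto_const_nhds hsum
    (Eventually.of_forall (fun n => zero_le)) hbound
end
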